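/- Characterization of worst-cost functions for fixed transactions: if f is normalized at x, then C(f, x) = 1 − |F(x)| / n! if and only if there exists a permutation σ ∈ S such that for every π ∈ S, f(π·x) = 1 if π·x = σ·x and f(π·x) = 0 otherwise. -/
import Mathlib

/-- The action of a permutation `π` on a list of transactions `x : Fin n → A`:
`(π · x) i = x (π⁻¹ i)`. -/
def permAct {n : ℕ} {A : Type*} (π : Equiv.Perm (Fin n)) (x : Fin n → A) : Fin n → A :=
  fun i => x (π⁻¹ i)

/-- The cost of MEV: `C(f, x) = max_{π ∈ S} f(π·x) - (∑_{π ∈ S} f(π·x)) / n!`. -/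
noncomputable def mevCost {n : ℕ} {A : Type*} (f : (Fin n → A) → ℝ) (x : Fin n → A) : ℝ :=
  (Finset.univ.sup' Finset.univ_nonempty fun π : Equiv.Perm (Fin n) => f (permAct π x)) -
    (∑ π : Equiv.Perm (Fin n), f (permAct π x)) / (Nat.factorial n : ℝ)

open scoped Classical in
/-- The stabilizer `F(x) = {π ∈ S | π·x = x}` as a finset. -/
noncomputable def stab {n : ℕ} {A : Type*} (x : Fin n → A) : Finset (Equiv.Perm (Fin n)) :=
  Finset.univ.filter fun π => permAct π x = x

lemma permAct_one {n : ℕ} {A : Type*} (x : Fin n → A) : permAct 1 x = x := rfl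

lemma permAct_mul {n : ℕ} {A : Type*} (σ τ : Equiv.Perm (Fin n)) (x : Fin n → A) :
    permAct (σ * τ) x = permAct σ (permAct τ x) := rfl

open scoped Classical

lemma permAct_eq_iff {n : ℕ} {A : Type*} (σ π : Equiv.Perm (Fin n)) (x : Fin n → A) :
    permAct π x = permAct σ x ↔ permAct (σ⁻¹ * π) x = x := by
  constructor
  · intro h
    rw [permAct_mul, h, ← permAct_mul, inv_mul_cancel, permAct_one]
  · intro h
    have := congrArg (permAct σ) h
    rwa [← permAct_mul, mul_inv_cancel_left] at this

lemma card_coset {n : ℕ} {A : Type*} (σ : Equiv.Perm (Fin n)) (x : Fin n → A) :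
    (Finset.univ.filter fun π => permAct π x = permAct σ x).card = (stab x).card := by
  apply Finset.card_bij (fun π _ => σ⁻¹ * π)
  · intro π hπ
    simp only [Finset.mem_filter, Finset.mem_univ, true_and] at hπ
    simp only [stab, Finset.mem_filter, Finset.mem_univ, true_and]
    exact (permAct_eq_iff σ π x).mp hπ
  · intro a ha b hb h
    exact mul_left_cancel h
  · intro τ hτ
    simp only [stab, Finset.mem_filter, Finset.mem_univ, true_and] at hτ
    refine ⟨σ * τ, ?_, by group⟩
    simp only [Finset.mem_filter, Finset.mem_univ, true_and]
    rw [permAct_mul, hτ]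

/-- Characterization of worst-cost functions for fixed transactions: a normalized `f`
saturates the bound `C(f, x) = 1 - |F(x)| / n!` if, and only if, `f` restricted to the
orbit of `x` is the indicator of a single point `σ·x` of the orbit. -/
theorem mevCost_eq_one_sub_stab_iff {n : ℕ} {A : Type*} (hn : 1 ≤ n)
    (f : (Fin n → A) → ℝ) (x : Fin n → A)
    (hnonneg : ∀ π : Equiv.Perm (Fin n), 0 ≤ f (permAct π x))
    (hle : ∀ π : Equiv.Perm (Fin n), f (permAct π x) ≤ 1)
    (hmax : (Finset.univ.sup' Finset.univ_nonempty
      fun π : Equiv.Perm (Fin n) => f (permAct π x)) = 1) :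
    mevCost f x = 1 - (stab x).card / (Nat.factorial n : ℝ) ↔
      ∃ σ : Equiv.Perm (Fin n), ∀ π : Equiv.Perm (Fin n),
        (permAct π x = permAct σ x → f (permAct π x) = 1) ∧
        (permAct π x ≠ permAct σ x → f (permAct π x) = 0) := by
  have hfact : (0:ℝ) < (Nat.factorial n : ℝ) := by positivity
  have hcost : mevCost f x = 1 - (∑ π : Equiv.Perm (Fin n), f (permAct π x)) /
      (Nat.factorial n : ℝ) := by rw [mevCost, hmax]
  rw [hcost]
  have hiff : (1 - (∑ π : Equiv.Perm (Fin n), f (permAct π x)) / (Nat.factorial n : ℝ)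
      = 1 - (stab x).card / (Nat.factorial n : ℝ)) ↔
      (∑ π : Equiv.Perm (Fin n), f (permAct π x)) = (stab x).card := by
    constructor
    · intro h
      have h' : (∑ π : Equiv.Perm (Fin n), f (permAct π x)) / (Nat.factorial n : ℝ)
          = (stab x).card / (Nat.factorial n : ℝ) := by linarith
      exact div_left_inj' hfact.ne' |>.mp h'
    · intro h; rw [h]
  rw [hiff]
  constructor
  · intro hsum
    obtain ⟨σ, -, hσ⟩ := Finset.exists_mem_eq_sup' Finset.univ_nonempty
      (fun π : Equiv.Perm (Fin n) => f (permAct π x))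
    have hfσ : f (permAct σ x) = 1 := by rw [← hσ, hmax]
    set T := Finset.univ.filter fun π : Equiv.Perm (Fin n) => permAct π x = permAct σ x with hT
    have hsplit := Finset.sum_filter_add_sum_filter_not Finset.univ
      (fun π : Equiv.Perm (Fin n) => permAct π x = permAct σ x)
      (fun π => f (permAct π x))
    have hsumT : ∑ π ∈ T, f (permAct π x) = T.card := by
      rw [Finset.sum_congr rfl (fun π hπ => ?_), Finset.sum_const, nsmul_eq_mul, mul_one]
      simp only [hT, Finset.mem_filter] at hπ
      rw [hπ.2, hfσ]
    have hcardT : (T.card : ℝ) = (stab x).card := by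
      rw [hT, card_coset]
    have hrest : ∑ π ∈ Finset.univ.filter
        (fun π : Equiv.Perm (Fin n) => ¬ permAct π x = permAct σ x), f (permAct π x) = 0 := by
      have : ∑ π ∈ T, f (permAct π x) + ∑ π ∈ Finset.univ.filter
          (fun π : Equiv.Perm (Fin n) => ¬ permAct π x = permAct σ x), f (permAct π x)
          = (stab x).card := by rw [hsplit, hsum]
      rw [hsumT, hcardT] at this
      linarith
    have hzero := (Finset.sum_eq_zero_iff_of_nonneg
      (fun π _ => hnonneg π)).mp hrest
    refine ⟨σ, fun π => ⟨fun h => by rw [h, hfσ], fun h => ?_⟩⟩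
    exact hzero π (by simp [h])
  · rintro ⟨σ, hσ⟩
    set T := Finset.univ.filter fun π : Equiv.Perm (Fin n) => permAct π x = permAct σ x with hT
    have hsplit := Finset.sum_filter_add_sum_filter_not Finset.univ
      (fun π : Equiv.Perm (Fin n) => permAct π x = permAct σ x)
      (fun π => f (permAct π x))
    have hsumT : ∑ π ∈ T, f (permAct π x) = T.card := by
      rw [Finset.sum_congr rfl (fun π hπ => ?_), Finset.sum_const, nsmul_eq_mul, mul_one]
      simp only [hT, Finset.mem_filter] at hπ
      exact (hσ π).1 hπ.2
    have hrest : ∑ π ∈ Finset.univ.filter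
        (fun π : Equiv.Perm (Fin n) => ¬ permAct π x = permAct σ x), f (permAct π x) = 0 := by
      apply Finset.sum_eq_zero
      intro π hπ
      simp only [Finset.mem_filter] at hπ
      exact (hσ π).2 hπ.2
    have hcardT : (T.card : ℝ) = (stab x).card := by rw [hT, card_coset]
    rw [← hsplit, hsumT, hrest, add_zero, hcardT]
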